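/- Index expectation over colorings: let G be a finite simple graph with chromatic number at most c, and let Ω be the finite set of proper c-colorings g: V → {1,...,c} with uniform probability. If for every vertex x and every k-vertex clique y in S(x) the probability that g(x) > g(u) for all u ∈ y equals 1/(k+1), then E[i_{g,x}(t)·t] = F_{S(x)}(t) and consequently f_G(t) = 1 + Σ_x F_{S(x)}(t). -/

import Mathlib

open Finset
open scoped Classical

/-- The f-polynomial of a finite simple graph. -/
noncomputable def fPoly {V : Type*} [Fintype V] (G : SimpleGraph V) (t : ℝ) : ℝ :=
  1 + ∑ k ∈ Finset.range (Fintype.card V), ((G.cliqueFinset (k + 1)).card : ℝ) * t ^ (k + 1)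

/-- The antiderivative `F_G(t) = ∫₀ᵗ f_G(s) ds = t + Σ_k f_k t^{k+2}/(k+2)`. -/
noncomputable def FPoly {V : Type*} [Fintype V] (G : SimpleGraph V) (t : ℝ) : ℝ :=
  t + ∑ k ∈ Finset.range (Fintype.card V),
    ((G.cliqueFinset (k + 1)).card : ℝ) * t ^ (k + 2) / (k + 2)

/-- The part of the unit sphere of `x` where `g` is smaller than `g x`. -/
def sphereSet {V : Type*} (G : SimpleGraph V) (g : V → ℝ) (x : V) : Set V :=
  {y | G.Adj x y ∧ g y < g x}

/-- The sub-level unit sphere `S_g(x)` as an induced subgraph. -/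
def sphereBelow {V : Type*} (G : SimpleGraph V) (g : V → ℝ) (x : V) :
    SimpleGraph (sphereSet G g x) :=
  G.induce (sphereSet G g x)

/-- The unit sphere `S(x)`: the induced subgraph on the neighbors of `x`. -/
def unitSphere {V : Type*} (G : SimpleGraph V) (x : V) : SimpleGraph (G.neighborSet x) :=
  G.induce (G.neighborSet x)

/-- The finite probability space of proper `c`-colorings of `G`. -/
def Colorings {V : Type*} (G : SimpleGraph V) (c : ℕ) : Type _ :=
  {g : V → Fin c // ∀ ⦃a b : V⦄, G.Adj a b → g a ≠ g b}

noncomputable instance {V : Type*} [Fintype V] (G : SimpleGraph V) (c : ℕ) :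
    Fintype (Colorings G c) := by
  unfold Colorings; infer_instance

/-- The real-valued function of a coloring. -/
def colorVal {V : Type*} {c : ℕ} (g : V → Fin c) : V → ℝ := fun v => ((g v : ℕ) : ℝ)

/-! Summing the `k`-clique counts of `S_g(x)` over all colorings `g` and exchanging the sums,
each `k`-clique `y` of `S(x)` is counted once for every coloring in which `x` lies above all of
`y`; by homogeneity these are a fraction `1/(k+1)` of all colorings. So the expected number of
`k`-cliques of `S_g(x)` is `f_k(S(x))/(k+1)`, which is the coefficient of `t^(k+1)` in
`F_{S(x)}(t)`. For the second identity, removing `x` from a `(k+1)`-clique containing `x` gives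
a `k`-clique of `S(x)`, and each `(k+1)`-clique contains `k+1` vertices, so
`∑ₓ f_k(S(x)) = (k+1) f_{k+1}(G)`. -/

namespace SimpleGraph

section CliqueFinset

variable {V : Type*} [Fintype V] [DecidableEq V] (G : SimpleGraph V) [DecidableRel G.Adj]

theorem card_cliqueFinset_induce (s : Set V) [Fintype s] [DecidableEq s]
    [DecidableRel (G.induce s).Adj] (n : ℕ) :
    #((G.induce s).cliqueFinset n) = #{t ∈ G.cliqueFinset n | ↑t ⊆ s} := by
  rw [← card_map (mapEmbedding (.subtype (· ∈ s))).toEmbedding]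
  congr 1
  ext t
  simp only [mem_map, mem_filter, mem_cliqueFinset_iff, isNClique_induce_iff,
    RelEmbedding.coe_toEmbedding, mapEmbedding_apply]
  constructor
  · rintro ⟨u, hu, rfl⟩
    refine ⟨hu, fun v hv => ?_⟩
    obtain ⟨w, -, rfl⟩ := mem_map.1 (mem_coe.1 hv)
    exact w.2
  · rintro ⟨ht, hts⟩
    refine ⟨t.subtype (· ∈ s), ?_, subtype_map_of_mem fun v hv => hts hv⟩
    rwa [subtype_map_of_mem fun v hv => hts hv]

theorem card_cliqueFinset_subset_neighborSet (x : V) (n : ℕ) :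
    #{t ∈ G.cliqueFinset n | ↑t ⊆ G.neighborSet x}
      = #{t ∈ G.cliqueFinset (n + 1) | x ∈ t} := by
  refine card_nbij' (insert x) (·.erase x) ?_ ?_ ?_ ?_
  · intro t ht
    simp only [coe_filter, Set.mem_ofPred_eq, mem_cliqueFinset_iff] at ht ⊢
    exact ⟨ht.1.insert fun b hb => ht.2 hb, mem_insert_self x t⟩
  · intro t ht
    simp only [coe_filter, Set.mem_ofPred_eq, mem_cliqueFinset_iff] at ht ⊢
    refine ⟨ht.1.erase_of_mem ht.2, fun v hv => ?_⟩
    rw [coe_erase, Set.mem_sdiff] at hv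
    exact ht.1.isClique ht.2 hv.1 (Ne.symm hv.2)
  · intro t ht
    simp only [coe_filter, Set.mem_ofPred_eq] at ht
    exact erase_insert fun hx => G.loopless.irrefl x (ht.2 hx)
  · intro t ht
    simp only [coe_filter, Set.mem_ofPred_eq] at ht
    exact insert_erase ht.2

theorem sum_card_cliqueFinset_mem (n : ℕ) :
    ∑ x, #{t ∈ G.cliqueFinset n | x ∈ t} = n * #(G.cliqueFinset n) := by
  have := sum_card_bipartiteAbove_eq_sum_card_bipartiteBelow (s := univ)
    (t := G.cliqueFinset n) (r := (· ∈ ·))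
  simp only [bipartiteAbove, bipartiteBelow, filter_mem_eq_inter, univ_inter] at this
  rw [this, sum_congr rfl fun t ht => (mem_cliqueFinset_iff.1 ht).card_eq, sum_const, smul_eq_mul,
    mul_comm]

end CliqueFinset

section CliqueCount

variable {V : Type*} [Fintype V] (G : SimpleGraph V)

/-- The number `f_n(G)` of `n`-cliques, built with the classical instances that `fPoly` and `FPoly`
use internally, so that it occurs syntactically when they are unfolded. -/
noncomputable def cliqueCount (n : ℕ) : ℕ :=
  #(G.cliqueFinset n)

theorem fPoly_def (t : ℝ) :
    fPoly G t = 1 + ∑ k ∈ range (Fintype.card V), (G.cliqueCount (k + 1) : ℝ) * t ^ (k + 1) :=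
  rfl

theorem FPoly_def (t : ℝ) :
    FPoly G t = t + ∑ k ∈ range (Fintype.card V),
      (G.cliqueCount (k + 1) : ℝ) * t ^ (k + 2) / (k + 2) :=
  rfl

theorem cliqueCount_eq_card [DecidableEq V] [DecidableRel G.Adj] (n : ℕ) :
    G.cliqueCount n = #(G.cliqueFinset n) := by
  unfold cliqueCount
  congr!

theorem cliqueCount_eq_zero_of_card_lt {n : ℕ} (h : Fintype.card V < n) :
    G.cliqueCount n = 0 := by
  rw [cliqueCount, card_eq_zero, cliqueFinset_eq_empty_iff]
  exact G.cliqueFree_of_card_lt h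

theorem cliqueCount_one : G.cliqueCount 1 = Fintype.card V := by
  classical
  have : G.cliqueFinset 1 = univ.map ⟨singleton, singleton_injective⟩ := by
    ext s
    simp [isNClique_one, eq_comm]
  rw [cliqueCount_eq_card, this, card_map, card_univ]

theorem cliqueCount_induce (s : Set V) [Fintype s] (n : ℕ) :
    (G.induce s).cliqueCount n = #{t ∈ G.cliqueFinset n | ↑t ⊆ s} := by
  rw [cliqueCount_eq_card, card_cliqueFinset_induce]

theorem sum_cliqueCount_unitSphere (n : ℕ) :
    ∑ x, (unitSphere G x).cliqueCount n = (n + 1) * G.cliqueCount (n + 1) := by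
  simp only [unitSphere, cliqueCount_induce, card_cliqueFinset_subset_neighborSet]
  rw [sum_card_cliqueFinset_mem, cliqueCount]

end CliqueCount

end SimpleGraph

open SimpleGraph

section Polynomials

variable {V : Type*} [Fintype V] (G : SimpleGraph V)

theorem fPoly_eq_of_card_le {m : ℕ} (hm : Fintype.card V ≤ m) (t : ℝ) :
    fPoly G t = 1 + ∑ k ∈ range m, (G.cliqueCount (k + 1) : ℝ) * t ^ (k + 1) := by
  rw [fPoly_def]
  refine congrArg (1 + ·) (sum_subset (range_subset_range.2 hm) fun k _ hk => ?_)
  rw [G.cliqueCount_eq_zero_of_card_lt (by simp at hk; omega)]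
  simp

theorem FPoly_eq_of_card_le {m : ℕ} (hm : Fintype.card V ≤ m) (t : ℝ) :
    FPoly G t = t + ∑ k ∈ range m, (G.cliqueCount (k + 1) : ℝ) * t ^ (k + 2) / (k + 2) := by
  rw [FPoly_def]
  refine congrArg (t + ·) (sum_subset (range_subset_range.2 hm) fun k _ hk => ?_)
  rw [G.cliqueCount_eq_zero_of_card_lt (by simp at hk; omega)]
  simp

theorem fPoly_eq_one_add_sum_FPoly_unitSphere (t : ℝ) :
    fPoly G t = 1 + ∑ x, FPoly (unitSphere G x) t := by
  have hcoeff (k : ℕ) :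
      ∑ x, ((unitSphere G x).cliqueCount (k + 1) : ℝ) * t ^ (k + 2) / (k + 2)
        = G.cliqueCount (k + 2) * t ^ (k + 2) := by
    simp only [← sum_div, ← sum_mul, ← Nat.cast_sum, sum_cliqueCount_unitSphere]
    push_cast
    field_simp
    ring
  calc fPoly G t
      = 1 + ∑ k ∈ range (Fintype.card V + 1), (G.cliqueCount (k + 1) : ℝ) * t ^ (k + 1) :=
        fPoly_eq_of_card_le G (Fintype.card V).le_succ t
    _ = 1 + (Fintype.card V * t +
          ∑ k ∈ range (Fintype.card V), (G.cliqueCount (k + 2) : ℝ) * t ^ (k + 2)) := by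
        rw [sum_range_succ', cliqueCount_one]
        ring
    _ = 1 + ∑ x, FPoly (unitSphere G x) t := by
        simp only [FPoly_eq_of_card_le _ (Fintype.card_subtype_le _), sum_add_distrib, sum_const,
          card_univ, nsmul_eq_mul]
        rw [sum_comm]
        simp only [hcoeff]

end Polynomials

section Colorings

variable {V : Type*} (G : SimpleGraph V) {c : ℕ}

theorem nonempty_colorings_of_chromaticNumber_le (h : G.chromaticNumber ≤ c) :
    Nonempty (Colorings G c) := by
  obtain ⟨C⟩ := chromaticNumber_le_iff_colorable.1 h
  exact ⟨⟨C, fun _ _ hab => C.valid hab⟩⟩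

theorem colorVal_lt_colorVal {g : V → Fin c} {u v : V} :
    colorVal g u < colorVal g v ↔ g u < g v := by
  simp only [colorVal, Nat.cast_lt, Fin.val_fin_lt]

theorem coe_subset_sphereSet_iff {g : V → ℝ} {x : V} {t : Finset V} :
    ↑t ⊆ sphereSet G g x ↔ ↑t ⊆ G.neighborSet x ∧ ∀ u ∈ t, g u < g x := by
  simp only [Set.subset_def, sphereSet, mem_coe, Set.mem_ofPred_eq, mem_neighborSet]
  exact forall₂_and

variable [Fintype V]

theorem sum_cliqueCount_sphereBelow (x : V) (n : ℕ) :
    ∑ g : Colorings G c, (sphereBelow G (colorVal g.1) x).cliqueCount n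
      = ∑ t ∈ G.cliqueFinset n with ↑t ⊆ G.neighborSet x,
          #{g : Colorings G c | ∀ u ∈ t, g.1 u < g.1 x} := by
  simp only [sphereBelow, cliqueCount_induce, coe_subset_sphereSet_iff, colorVal_lt_colorVal,
    ← filter_filter, card_filter]
  exact sum_comm

theorem card_mul_sum_cliqueCount_sphereBelow (x : V)
    (h : ∀ t : Finset V, ↑t ⊆ G.neighborSet x → G.IsClique (t : Set V) → t.Nonempty →
      (#t + 1) * #{g : Colorings G c | ∀ u ∈ t, g.1 u < g.1 x} = Fintype.card (Colorings G c))
    (n : ℕ) :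
    (n + 2) * ∑ g : Colorings G c, (sphereBelow G (colorVal g.1) x).cliqueCount (n + 1)
      = Fintype.card (Colorings G c) * (unitSphere G x).cliqueCount (n + 1) := by
  rw [sum_cliqueCount_sphereBelow, mul_sum, unitSphere, cliqueCount_induce, mul_comm]
  rw [sum_congr rfl fun t ht => ?_, sum_const, smul_eq_mul]
  obtain ⟨ht, hsub⟩ := mem_filter.1 ht
  obtain ⟨hcl, hcard⟩ := mem_cliqueFinset_iff.1 ht
  rw [← h t hsub hcl (card_pos.1 (by omega)), hcard]

theorem sum_mul_fPoly_sphereBelow (x : V)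
    (h : ∀ t : Finset V, ↑t ⊆ G.neighborSet x → G.IsClique (t : Set V) → t.Nonempty →
      (#t + 1) * #{g : Colorings G c | ∀ u ∈ t, g.1 u < g.1 x} = Fintype.card (Colorings G c))
    (t : ℝ) :
    ∑ g : Colorings G c, t * fPoly (sphereBelow G (colorVal g.1) x) t
      = Fintype.card (Colorings G c) * FPoly (unitSphere G x) t := by
  have hcoeff (k : ℕ) :
      ∑ g : Colorings G c, ((sphereBelow G (colorVal g.1) x).cliqueCount (k + 1) : ℝ)
        = Fintype.card (Colorings G c) * (unitSphere G x).cliqueCount (k + 1) / (k + 2) := by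
    rw [eq_div_iff (by positivity), mul_comm, ← Nat.cast_sum]
    exact_mod_cast card_mul_sum_cliqueCount_sphereBelow G x h k
  calc ∑ g : Colorings G c, t * fPoly (sphereBelow G (colorVal g.1) x) t
      = ∑ g : Colorings G c, (t + ∑ k ∈ range (Fintype.card V),
          ((sphereBelow G (colorVal g.1) x).cliqueCount (k + 1) : ℝ) * t ^ (k + 2)) := by
        refine sum_congr rfl fun g _ => ?_
        rw [fPoly_eq_of_card_le _ (Fintype.card_subtype_le _), mul_add, mul_one, mul_sum]
        exact congrArg (t + ·) (sum_congr rfl fun k _ => by ring)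
    _ = Fintype.card (Colorings G c) * t + ∑ k ∈ range (Fintype.card V), (∑ g : Colorings G c,
          ((sphereBelow G (colorVal g.1) x).cliqueCount (k + 1) : ℝ)) * t ^ (k + 2) := by
        rw [sum_add_distrib, sum_const, card_univ, nsmul_eq_mul, sum_comm]
        simp only [sum_mul]
    _ = Fintype.card (Colorings G c) * FPoly (unitSphere G x) t := by
        rw [FPoly_eq_of_card_le _ (Fintype.card_subtype_le _), mul_add, mul_sum]
        simp only [hcoeff]
        exact congrArg (_ + ·) (sum_congr rfl fun k _ => by ring)

end Colorings

/-- Index expectation over proper `c`-colorings: if for every vertex `x` and every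
`k`-vertex clique `y` in `S(x)` the probability that `g x` exceeds `g` on all of `y` is
`1/(k+1)`, then `E[t·i_{g,x}(t)] = F_{S(x)}(t)` and hence `f_G(t) = 1 + Σ_x F_{S(x)}(t)`. -/
theorem index_expectation_colorings {V : Type*} [Fintype V] (G : SimpleGraph V) (c : ℕ)
    (hchrom : G.chromaticNumber ≤ (c : ℕ∞))
    (hhom : ∀ x : V, ∀ y : Finset V, (↑y : Set V) ⊆ G.neighborSet x →
      G.IsClique (y : Set V) → y.Nonempty →
      ((Finset.univ.filter (fun gc : Colorings G c =>
          ∀ u ∈ y, gc.1 u < gc.1 x)).card : ℝ) / (Fintype.card (Colorings G c) : ℝ)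
        = 1 / (y.card + 1)) :
    (∀ x : V, ∀ t : ℝ,
      (∑ gc : Colorings G c, t * fPoly (sphereBelow G (colorVal gc.1) x) t)
          / (Fintype.card (Colorings G c) : ℝ)
        = FPoly (unitSphere G x) t)
    ∧ (∀ t : ℝ, fPoly G t = 1 + ∑ x : V, FPoly (unitSphere G x) t) := by
  have := nonempty_colorings_of_chromaticNumber_le G hchrom
  have hN : (Fintype.card (Colorings G c) : ℝ) ≠ 0 := Nat.cast_ne_zero.2 Fintype.card_ne_zero
  refine ⟨fun x t => ?_, fPoly_eq_one_add_sum_FPoly_unitSphere G⟩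
  have hmax (y : Finset V) (hy : (↑y : Set V) ⊆ G.neighborSet x)
      (hcl : G.IsClique (y : Set V)) (hne : y.Nonempty) :
      (#y + 1) * #{g : Colorings G c | ∀ u ∈ y, g.1 u < g.1 x}
        = Fintype.card (Colorings G c) := by
    have := hhom x y hy hcl hne
    rw [div_eq_div_iff hN (by positivity), one_mul, mul_comm] at this
    exact_mod_cast this
  rw [sum_mul_fPoly_sphereBelow G x hmax t, mul_div_cancel_left₀ _ hN]
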